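/- Let f : M → M be continuous on a compact metric space, and suppose ν ∈ Per_f is supported on the orbit of a periodic point y₀ of period r that lies in a periodic shrinking set I of period p dividing r and with diam(I) < 1/q, and let x₀ be another point fixed by f^r with dist(y₀, x₀) < 1/q. Then for every ε > 0 there exists q such that d(μ₀, ν) < ε, where μ₀ := (1/r) Σ_{j=0}^{r−1} δ_{f^j(x₀)}; i.e., the periodic measure at x₀ can be approximated arbitrarily well by q-shrinked periodic measures, for q large, provided such y₀ always exist within distance 1/q of x₀. -/

import Mathlib

/-!
The weights `(1/2)^(i+1)` make all test functions with index `≥ N` contribute at most `(1/2)^N`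
to `d`. The finitely many functions `Ψ i ∘ f^[j]` with `i < N`, `j < r` are uniformly
equicontinuous on the compact space, so for `x₀` and `y₀` close enough the orbit averages of
each of the first `N` test functions differ by less than `ε / 2`.
-/

open MeasureTheory Filter Topology Metric Set Function
open scoped ENNReal NNReal

/-- The explicit metric `d` on measures induced by a countable dense family of test
functions, metrizing the weak* topology. -/
noncomputable def wd {M : Type*} [MetricSpace M] [MeasurableSpace M]
    (Ψ : ℕ → M → ℝ) (μ ν : Measure M) : ℝ :=
  ∑' i : ℕ, (1 / 2 : ℝ) ^ (i + 1) * |(∫ x, Ψ i x ∂μ) - ∫ x, Ψ i x ∂ν|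

open Finset

lemma summable_half_pow_succ : Summable fun i : ℕ => (1 / 2 : ℝ) ^ (i + 1) :=
  (summable_nat_add_iff 1).2 summable_geometric_two

lemma tsum_half_pow_succ : ∑' i : ℕ, (1 / 2 : ℝ) ^ (i + 1) = 1 := by
  simp_rw [pow_succ', tsum_mul_left, tsum_geometric_two]
  norm_num

lemma tsum_half_pow_succ_mul_le {a : ℕ → ℝ} {η : ℝ} (N : ℕ) (hη : 0 ≤ η)
    (ha0 : ∀ i, 0 ≤ a i) (ha1 : ∀ i, a i ≤ 1) (haN : ∀ i < N, a i ≤ η) :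
    ∑' i, (1 / 2 : ℝ) ^ (i + 1) * a i ≤ η + (1 / 2) ^ N := by
  have hsum : Summable fun i => (1 / 2 : ℝ) ^ (i + 1) * a i :=
    summable_half_pow_succ.of_nonneg_of_le (fun i => mul_nonneg (by positivity) (ha0 i))
      fun i => mul_le_of_le_one_right (by positivity) (ha1 i)
  rw [← hsum.sum_add_tsum_nat_add N]
  gcongr
  · calc ∑ i ∈ range N, (1 / 2 : ℝ) ^ (i + 1) * a i
        ≤ ∑ i ∈ range N, (1 / 2 : ℝ) ^ (i + 1) * η :=
          sum_le_sum fun i hi => by gcongr; exact haN i (mem_range.1 hi)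
      _ = η * ∑ i ∈ range N, (1 / 2 : ℝ) ^ (i + 1) := by rw [← sum_mul, mul_comm]
      _ ≤ η * ∑' i : ℕ, (1 / 2 : ℝ) ^ (i + 1) := by
          gcongr; exact summable_half_pow_succ.sum_le_tsum _ fun i _ => by positivity
      _ = η := by rw [tsum_half_pow_succ, mul_one]
  · calc ∑' i, (1 / 2 : ℝ) ^ (i + N + 1) * a (i + N)
        ≤ ∑' i, (1 / 2 : ℝ) ^ N * (1 / 2) ^ (i + 1) := by
          refine (summable_nat_add_iff N).2 hsum |>.tsum_le_tsum (fun i => ?_)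
            (summable_half_pow_succ.mul_left _)
          rw [show i + N + 1 = N + (i + 1) by omega, pow_add, mul_assoc]
          gcongr
          exact mul_le_of_le_one_right (by positivity) (ha1 _)
      _ = (1 / 2) ^ N := by rw [tsum_mul_left, tsum_half_pow_succ, mul_one]

lemma wd_le_of_abs_integral_sub_le {M : Type*} [MetricSpace M] [MeasurableSpace M]
    (Ψ : ℕ → M → ℝ) (μ ν : Measure M) (N : ℕ) {η : ℝ} (hη : 0 ≤ η)
    (h1 : ∀ i, |(∫ x, Ψ i x ∂μ) - ∫ x, Ψ i x ∂ν| ≤ 1)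
    (hN : ∀ i < N, |(∫ x, Ψ i x ∂μ) - ∫ x, Ψ i x ∂ν| ≤ η) :
    wd Ψ μ ν ≤ η + (1 / 2) ^ N :=
  tsum_half_pow_succ_mul_le N hη (fun _ => abs_nonneg _) h1 hN

lemma integral_avg_dirac {α : Type*} [MeasurableSpace α] [MeasurableSingletonClass α]
    (g : α → ℝ) (r : ℕ) (z : ℕ → α) :
    ∫ x, g x ∂((r : ℝ≥0∞)⁻¹ • ∑ j ∈ range r, Measure.dirac (z j))
      = (r : ℝ)⁻¹ * ∑ j ∈ range r, g (z j) := by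
  rw [integral_smul_measure, integral_finsetSum_measure fun j _ => integrable_dirac (by simp)]
  simp [integral_dirac, ENNReal.toReal_inv]

lemma abs_integral_avg_dirac_sub_le {α : Type*} [MeasurableSpace α]
    [MeasurableSingletonClass α] (g : α → ℝ) {r : ℕ} {z w : ℕ → α} {η : ℝ} (hη : 0 ≤ η)
    (h : ∀ j < r, |g (z j) - g (w j)| ≤ η) :
    |(∫ x, g x ∂((r : ℝ≥0∞)⁻¹ • ∑ j ∈ range r, Measure.dirac (z j)))
      - ∫ x, g x ∂((r : ℝ≥0∞)⁻¹ • ∑ j ∈ range r, Measure.dirac (w j))| ≤ η := by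
  rw [integral_avg_dirac, integral_avg_dirac, ← mul_sub, ← sum_sub_distrib, abs_mul,
    abs_of_nonneg (by positivity : (0 : ℝ) ≤ (r : ℝ)⁻¹)]
  calc (r : ℝ)⁻¹ * |∑ j ∈ range r, (g (z j) - g (w j))|
      ≤ (r : ℝ)⁻¹ * (r * η) := by
        gcongr
        refine (abs_sum_le_sum_abs _ _).trans ?_
        simpa using sum_le_card_nsmul _ _ η fun j hj => h j (mem_range.1 hj)
    _ ≤ η := by
        rcases r.eq_zero_or_pos with rfl | hr
        · simpa using hη
        · rw [inv_mul_cancel_left₀ (by positivity)]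

lemma exists_forall_abs_comp_iterate_sub_le {M : Type*} [PseudoMetricSpace M] [CompactSpace M]
    {Ψ : ℕ → M → ℝ} (hΨ : ∀ i, Continuous (Ψ i)) {f : M → M} (hf : Continuous f)
    (N r : ℕ) {η : ℝ} (hη : 0 < η) :
    ∃ δ > 0, ∀ x y, dist x y < δ → ∀ i < N, ∀ j < r, |Ψ i (f^[j] x) - Ψ i (f^[j] y)| ≤ η := by
  have hequi : UniformEquicontinuous fun k : Fin N × Fin r => Ψ k.1 ∘ f^[k.2] :=
    uniformEquicontinuous_finite.2 fun k =>
      CompactSpace.uniformContinuous_of_continuous ((hΨ k.1).comp (hf.iterate k.2))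
  obtain ⟨δ, hδ, hclose⟩ := Metric.uniformEquicontinuous_iff.1 hequi η hη
  exact ⟨δ, hδ, fun x y hxy i hi j hj => (hclose x y hxy (⟨i, hi⟩, ⟨j, hj⟩)).le⟩

theorem stmt19_general {M : Type*} [MetricSpace M] [CompactSpace M]
    [MeasurableSpace M] [BorelSpace M]
    (Ψ : ℕ → M → ℝ)
    (hΨc : ∀ i, Continuous (Ψ i))
    (hΨ01 : ∀ i x, Ψ i x ∈ Set.Icc (0 : ℝ) 1)
    (f : M → M) (hf : Continuous f)
    (r : ℕ) :
    ∀ ε > (0 : ℝ), ∃ q : ℕ, 1 ≤ q ∧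
      ∀ (x₀ y₀ : M) (I : Set M) (p : ℕ),
        IsOpen I → I.Nonempty → 1 ≤ p →
        (∀ i j, i < p → j < p → i ≠ j →
          Disjoint (f^[i] '' closure I) (f^[j] '' closure I)) →
        f^[p] '' closure I ⊆ I →
        diam I < 1 / q →
        p ∣ r →
        y₀ ∈ I → f^[r] y₀ = y₀ →
        f^[r] x₀ = x₀ → dist y₀ x₀ < 1 / q →
        wd Ψ ((r : ℝ≥0∞)⁻¹ • ∑ j ∈ Finset.range r, Measure.dirac (f^[j] x₀))
            ((r : ℝ≥0∞)⁻¹ • ∑ j ∈ Finset.range r, Measure.dirac (f^[j] y₀)) < ε := by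
  intro ε hε
  obtain ⟨N, hN⟩ := exists_pow_lt_of_lt_one (half_pos hε) (by norm_num : (1 / 2 : ℝ) < 1)
  obtain ⟨δ, hδ, hclose⟩ := exists_forall_abs_comp_iterate_sub_le hΨc hf N r (half_pos hε)
  obtain ⟨q, hq⟩ := exists_nat_one_div_lt hδ
  refine ⟨q + 1, by omega, fun x₀ y₀ I p _ _ _ _ _ _ _ _ _ _ hdist => ?_⟩
  have hxy : dist x₀ y₀ < δ := by
    rw [dist_comm]
    exact hdist.trans (by exact_mod_cast hq)
  refine (wd_le_of_abs_integral_sub_le Ψ _ _ N (half_pos hε).le (fun i => ?_)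
    fun i hi => ?_).trans_lt (by linarith)
  · exact abs_integral_avg_dirac_sub_le (Ψ i) zero_le_one fun j _ =>
      abs_sub_le_of_nonneg_of_le (hΨ01 i _).1 (hΨ01 i _).2 (hΨ01 i _).1 (hΨ01 i _).2
  · exact abs_integral_avg_dirac_sub_le (Ψ i) (half_pos hε).le fun j hj =>
      hclose x₀ y₀ hxy i hi j hj

/-- For each period `r` and each `ε > 0` there is `q ≥ 1` such that: whenever `y₀` is a
periodic point of period `r` lying in a periodic shrinking set `I` of period `p ∣ r` with
`diam I < 1/q` (so that the periodic measure `ν` carried by the orbit of `y₀` is a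
`q`-shrinked periodic measure), and `x₀` is another point fixed by `f^[r]` with
`dist y₀ x₀ < 1/q`, then `d(μ₀, ν) < ε` for the periodic measure `μ₀` carried by the orbit
of `x₀`. -/
theorem stmt19 {M : Type*} [MetricSpace M] [CompactSpace M]
    [MeasurableSpace M] [BorelSpace M]
    (Ψ : ℕ → M → ℝ)
    (hΨc : ∀ i, Continuous (Ψ i))
    (hΨ01 : ∀ i x, Ψ i x ∈ Set.Icc (0 : ℝ) 1)
    (hdense : ∀ g : M → ℝ, Continuous g → (∀ x, g x ∈ Set.Icc (0 : ℝ) 1) →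
      ∀ ε > (0 : ℝ), ∃ i, ∀ x, |g x - Ψ i x| ≤ ε)
    (f : M → M) (hf : Continuous f)
    (r : ℕ) (hr : 1 ≤ r) :
    ∀ ε > (0 : ℝ), ∃ q : ℕ, 1 ≤ q ∧
      ∀ (x₀ y₀ : M) (I : Set M) (p : ℕ),
        IsOpen I → I.Nonempty → 1 ≤ p →
        (∀ i j, i < p → j < p → i ≠ j →
          Disjoint (f^[i] '' closure I) (f^[j] '' closure I)) →
        f^[p] '' closure I ⊆ I →
        diam I < 1 / q →
        p ∣ r →
        y₀ ∈ I → f^[r] y₀ = y₀ →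
        f^[r] x₀ = x₀ → dist y₀ x₀ < 1 / q →
        wd Ψ ((r : ℝ≥0∞)⁻¹ • ∑ j ∈ Finset.range r, Measure.dirac (f^[j] x₀))
            ((r : ℝ≥0∞)⁻¹ • ∑ j ∈ Finset.range r, Measure.dirac (f^[j] y₀)) < ε :=
  stmt19_general Ψ hΨc hΨ01 f hf r
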